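/- arXiv:1901.07158 — 2 statements merged into one kernel-verified Lean document; each statement's English description precedes it below -/
import Mathlib

section
/- Let rk be an extended Sylvester map rank function for a unital ring R arising from a bivariant Sylvester module rank function dim via rk(α) := dim(im(α)|cod(α)). Then for any maps α : M₁ → M₂ and β : M₂ → M₃ of R-modules, rk(β) = rk(αβ) + rk(β/α), where β/α : coker(α) → coker(αβ) is the induced map. -/
universe u
open scoped NNReal ENNReal

/-- A bivariant Sylvester module rank function for a unital ring `R`: to each pair of left
`R`-modules `N ⊆ M` (encoded as a submodule `N` of a module `M`) it assigns a value
`d M N ∈ ℝ≥0∞`, thought of as `dim(N|M)`, satisfying isomorphism invariance, normalization,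
direct sum additivity, the two continuity conditions, and additivity. -/
structure BivariantSylvesterRank (R : Type u) [Ring R] where
  d : ∀ (M : Type u) [AddCommGroup M] [Module R M], Submodule R M → ℝ≥0∞
  iso_invariant : ∀ (M N : Type u) [AddCommGroup M] [Module R M] [AddCommGroup N] [Module R N]
      (e : M ≃ₗ[R] N) (p : Submodule R M),
      d M p = d N (p.map (e : M →ₗ[R] N))
  d_zero : d PUnit ⊤ = 0
  d_ring : d R ⊤ = 1
  d_prod : ∀ (M N : Type u) [AddCommGroup M] [Module R M] [AddCommGroup N] [Module R N]
      (p : Submodule R M) (q : Submodule R N),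
      d (M × N) (p.prod q) = d M p + d N q
  continuity_sup : ∀ (M : Type u) [AddCommGroup M] [Module R M] (p : Submodule R M),
      d M p = ⨆ (p' : {p' : Submodule R M // p'.FG ∧ p' ≤ p}), d M p'.1
  continuity_inf : ∀ (M : Type u) [AddCommGroup M] [Module R M] (p : Submodule R M), p.FG →
      d M p = ⨅ (q : {q : Submodule R M // q.FG ∧ p ≤ q}), d q.1 (p.comap q.1.subtype)
  additivity : ∀ (M : Type u) [AddCommGroup M] [Module R M] (p : Submodule R M),
      d M ⊤ = d M p + d (M ⧸ p) ⊤

/-!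
The image of `β/α` is `im β / im(αβ)`, so the theorem is full additivity
`dim(q|M) = dim(p|M) + dim(q/p|M/p)` for `p = im(αβ) ≤ q = im β`.

For finitely generated `M` all values `dim(·|M)` are finite (`M` is a quotient of some `Rⁿ`), and
full additivity follows from the additivity axiom and `(M/p)/(q/p) ≅ M/q` by cancellation; the exact
sequence `M/(A ⊓ B) → M/A × M/B → M/(A ⊔ B) → 0` makes `dim(·|M)` submodular as well.

The general case is reduced to this one by the continuity axioms: outer continuity replaces
submodules by finitely generated ones, inner continuity replaces the ambient module by a finitely
generated `Y`, and since relative dimension can only drop along injective maps, `dim(·|Y)` bounds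
`dim(·|M)` from above.
-/

namespace Submodule

variable {R M N : Type*} [Ring R] [AddCommGroup M] [Module R M] [AddCommGroup N] [Module R N]

lemma exists_fg_le_map_eq {f : M →ₗ[R] N} {q : Submodule R M} {Z : Submodule R N} (hZ : Z.FG)
    (hZq : Z ≤ q.map f) : ∃ L : Submodule R M, L.FG ∧ L ≤ q ∧ L.map f = Z := by
  obtain ⟨S, rfl⟩ := hZ
  obtain ⟨T, hTq, hT, hTS⟩ :=
    Set.exists_subset_image_finite_and.1 ⟨_, span_le.1 hZq, S.finite_toSet, rfl⟩
  exact ⟨span R T, fg_span hT, span_le.2 hTq, by rw [Submodule.map_span, ← hTS]⟩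

end Submodule

namespace BivariantSylvesterRank

open Submodule LinearMap Function

variable {R : Type u} [Ring R] (dim : BivariantSylvesterRank R)
variable {M N P : Type u} [AddCommGroup M] [Module R M] [AddCommGroup N] [Module R N]
  [AddCommGroup P] [Module R P]

instance (p : Submodule R M) : Nonempty {p' : Submodule R M // p'.FG ∧ p' ≤ p} :=
  ⟨⟨⊥, fg_bot, bot_le⟩⟩

lemma d_mono {p q : Submodule R M} (h : p ≤ q) : dim.d M p ≤ dim.d M q := by
  rw [dim.continuity_sup M p, dim.continuity_sup M q]
  exact iSup_le fun i => le_iSup_of_le ⟨i.1, i.2.1, i.2.2.trans h⟩ le_rfl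

lemma d_top_congr (e : M ≃ₗ[R] N) : dim.d M ⊤ = dim.d N ⊤ := by
  rw [dim.iso_invariant M N e ⊤, Submodule.map_top, LinearEquiv.range]

lemma d_comap_subtype_map (f : N →ₗ[R] P) (hf : Injective f) {Z : Submodule R P}
    (hZ : range f = Z) (s : Submodule R N) :
    dim.d Z ((s.map f).comap Z.subtype) = dim.d N s := by
  subst hZ
  rw [dim.iso_invariant N _ (LinearEquiv.ofInjective f hf) s]
  congr 1
  ext ⟨_, y, rfl⟩
  simp only [mem_comap, subtype_apply, mem_map, Subtype.ext_iff, LinearEquiv.coe_coe,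
    LinearEquiv.ofInjective_apply, hf.eq_iff, exists_eq_right]

lemma d_map_le_of_injective (f : N →ₗ[R] P) (hf : Injective f) (s : Submodule R N) :
    dim.d P (s.map f) ≤ dim.d N s := by
  have hFG : ∀ s : Submodule R N, s.FG → dim.d P (s.map f) ≤ dim.d N s := by
    intro s hs
    rw [dim.continuity_inf N s hs]
    refine le_iInf fun ⟨Y, hY, hsY⟩ => ?_
    rw [dim.continuity_inf P _ (hs.map f)]
    refine iInf_le_of_le ⟨Y.map f, hY.map f, map_mono hsY⟩ (le_of_eq ?_)
    rw [← d_comap_subtype_map dim (f ∘ₗ Y.subtype) (hf.comp Y.injective_subtype)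
      (by rw [range_comp, range_subtype]), map_comp, map_comap_subtype, inf_eq_right.2 hsY]
  rw [dim.continuity_sup P]
  refine iSup_le fun ⟨t, ht, hts⟩ => ?_
  have htf : t ≤ range f := hts.trans LinearMap.map_le_range
  calc dim.d P t = dim.d P ((t.comap f).map f) := by rw [map_comap_eq_of_le htf]
    _ ≤ dim.d N (t.comap f) :=
        hFG _ (fg_of_fg_map_injective f hf (by rwa [map_comap_eq_of_le htf]))
    _ ≤ dim.d N s := d_mono dim <| by
        simpa only [comap_map_eq_of_injective hf] using comap_mono (f := f) hts

lemma d_le_d_comap_subtype {s Y : Submodule R M} (h : s ≤ Y) :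
    dim.d M s ≤ dim.d Y (s.comap Y.subtype) := by
  simpa [map_comap_subtype, inf_eq_right.2 h] using
    d_map_le_of_injective dim Y.subtype Y.injective_subtype (s.comap Y.subtype)

lemma d_comap_subtype_anti {s Y Y' : Submodule R M} (hsY : s ≤ Y) (hY : Y ≤ Y') :
    dim.d Y' (s.comap Y'.subtype) ≤ dim.d Y (s.comap Y.subtype) := by
  convert d_map_le_of_injective dim (inclusion hY) (inclusion_injective hY) (s.comap Y.subtype)
  ext ⟨x, hx⟩
  simp only [mem_comap, subtype_apply, mem_map]
  refine ⟨fun h => ⟨⟨x, hsY h⟩, h, rfl⟩, ?_⟩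
  rintro ⟨y, hy, h⟩
  cases congrArg Subtype.val h
  exact hy

lemma d_range_le (g : N →ₗ[R] P) : dim.d P (range g) ≤ dim.d (N ⧸ ker g) ⊤ := by
  simpa [range_liftQ] using d_map_le_of_injective dim ((ker g).liftQ g le_rfl)
    (ker_eq_bot.1 (ker_liftQ_eq_bot' _ g rfl)) ⊤

lemma d_quotient_top_le (p : Submodule R M) : dim.d (M ⧸ p) ⊤ ≤ dim.d M ⊤ := by
  rw [dim.additivity M p]
  exact le_add_self

lemma d_pi_fin (n : ℕ) : dim.d (Fin n → R) ⊤ = n := by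
  induction n with
  | zero =>
    rw [d_top_congr dim (LinearEquiv.ofSubsingleton (Fin 0 → R) PUnit.{u + 1}), dim.d_zero,
      Nat.cast_zero]
  | succ n ih =>
    rw [← d_top_congr dim (Fin.consLinearEquiv R fun _ => R), ← prod_top, dim.d_prod, dim.d_ring,
      ih, Nat.cast_succ, add_comm]

lemma d_top_ne_top [Module.Finite R M] : dim.d M ⊤ ≠ ∞ := by
  obtain ⟨n, f, hf⟩ := Module.Finite.exists_fin' R M
  rw [← d_top_congr dim (f.quotKerEquivOfSurjective hf)]
  refine ne_top_of_le_ne_top ?_ (d_quotient_top_le dim _)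
  rw [d_pi_fin]
  exact ENNReal.natCast_ne_top n

lemma d_ne_top [Module.Finite R M] (p : Submodule R M) : dim.d M p ≠ ∞ :=
  ne_top_of_le_ne_top (d_top_ne_top dim) (d_mono dim le_top)

lemma d_sup_eq_add_of_finite [Module.Finite R M] (p q : Submodule R M) :
    dim.d M (p ⊔ q) = dim.d M p + dim.d (M ⧸ p) (q.map p.mkQ) := by
  have h := dim.additivity M p
  rw [dim.additivity (M ⧸ p) (q.map p.mkQ), d_top_congr dim (quotientQuotientEquivQuotientSup p q),
    ← add_assoc, dim.additivity M (p ⊔ q)] at h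
  exact (ENNReal.add_left_inj (d_top_ne_top dim)).1 h

lemma d_quotient_add_d_quotient_le (A B : Submodule R M) :
    dim.d (M ⧸ A) ⊤ + dim.d (M ⧸ B) ⊤ ≤ dim.d (M ⧸ (A ⊓ B)) ⊤ + dim.d (M ⧸ (A ⊔ B)) ⊤ := by
  let g : M →ₗ[R] (M ⧸ A) × (M ⧸ B) := A.mkQ.prod B.mkQ
  let h : (M ⧸ A) × (M ⧸ B) →ₗ[R] M ⧸ (A ⊔ B) :=
    factor le_sup_left ∘ₗ fst R _ _ - factor le_sup_right ∘ₗ snd R _ _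
  have hker : ker g = A ⊓ B := by simp [g, ker_prod]
  have hsurj : Surjective h := by
    intro z
    obtain ⟨x, rfl⟩ := (A ⊔ B).mkQ_surjective z
    exact ⟨(A.mkQ x, 0), by simp [h]⟩
  have hexact : ker h = range g := by
    refine le_antisymm ?_ ?_
    · rintro ⟨u, v⟩ huv
      obtain ⟨x, rfl⟩ := A.mkQ_surjective u
      obtain ⟨y, rfl⟩ := B.mkQ_surjective v
      have hxy : x - y ∈ A ⊔ B := by
        simpa [h, sub_eq_zero, Submodule.Quotient.eq] using huv
      obtain ⟨a, ha, b, hb, hab⟩ := mem_sup.1 hxy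
      obtain rfl := eq_sub_of_add_eq' hab
      refine ⟨x - a, Prod.ext ?_ ?_⟩
      · simpa [g, Submodule.Quotient.eq] using ha
      · refine (Submodule.Quotient.eq B).2 ?_
        convert hb using 1
        abel
    · rintro _ ⟨x, rfl⟩
      simp [g, h]
  calc dim.d (M ⧸ A) ⊤ + dim.d (M ⧸ B) ⊤ = dim.d ((M ⧸ A) × (M ⧸ B)) ⊤ := by
        rw [← prod_top, dim.d_prod]
    _ = dim.d _ (range g) + dim.d (((M ⧸ A) × (M ⧸ B)) ⧸ range g) ⊤ := dim.additivity _ _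
    _ ≤ dim.d (M ⧸ (A ⊓ B)) ⊤ + dim.d (M ⧸ (A ⊔ B)) ⊤ := by
        rw [d_top_congr dim
          ((quotEquivOfEq _ _ hexact.symm).trans (h.quotKerEquivOfSurjective hsurj))]
        exact add_le_add_left (hker ▸ d_range_le dim g) _

lemma d_sup_add_d_inf_le_of_finite [Module.Finite R M] (A B : Submodule R M) :
    dim.d M (A ⊔ B) + dim.d M (A ⊓ B) ≤ dim.d M A + dim.d M B := by
  have hfin : dim.d (M ⧸ A) ⊤ + dim.d (M ⧸ B) ⊤ ≠ ∞ :=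
    ENNReal.add_ne_top.2 ⟨d_top_ne_top dim, d_top_ne_top dim⟩
  refine (ENNReal.add_le_add_iff_right hfin).1 ?_
  calc dim.d M (A ⊔ B) + dim.d M (A ⊓ B) + (dim.d (M ⧸ A) ⊤ + dim.d (M ⧸ B) ⊤)
      ≤ dim.d M (A ⊔ B) + dim.d M (A ⊓ B) + (dim.d (M ⧸ (A ⊓ B)) ⊤ + dim.d (M ⧸ (A ⊔ B)) ⊤) :=
        add_le_add le_rfl (d_quotient_add_d_quotient_le dim A B)
    _ = (dim.d M (A ⊔ B) + dim.d (M ⧸ (A ⊔ B)) ⊤) + (dim.d M (A ⊓ B) + dim.d (M ⧸ (A ⊓ B)) ⊤) := by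
        ring
    _ = (dim.d M A + dim.d (M ⧸ A) ⊤) + (dim.d M B + dim.d (M ⧸ B) ⊤) := by
        rw [← dim.additivity, ← dim.additivity, ← dim.additivity, ← dim.additivity]
    _ = dim.d M A + dim.d M B + (dim.d (M ⧸ A) ⊤ + dim.d (M ⧸ B) ⊤) := by ring

lemma d_quotient_comap_subtype (p : Submodule R M) {s Y : Submodule R M} (hsY : s ≤ Y) :
    dim.d (Y ⧸ p.comap Y.subtype) ((s.comap Y.subtype).map (p.comap Y.subtype).mkQ) =
      dim.d (Y.map p.mkQ) ((s.map p.mkQ).comap (Y.map p.mkQ).subtype) := by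
  have hker : p.comap Y.subtype = ker (p.mkQ ∘ₗ Y.subtype) := by rw [ker_comp, ker_mkQ]
  let f := (p.comap Y.subtype).liftQ (p.mkQ ∘ₗ Y.subtype) hker.le
  have hf : Injective f := ker_eq_bot.1 (ker_liftQ_eq_bot' _ _ hker)
  have hrange : range f = Y.map p.mkQ := by rw [range_liftQ, range_comp, range_subtype]
  rw [← d_comap_subtype_map dim f hf hrange, ← map_comp, liftQ_mkQ, map_comp, map_comap_subtype,
    inf_eq_right.2 hsY]

lemma d_map_mkQ_le_d_quotient (p : Submodule R M) {s Y : Submodule R M} (hsY : s ≤ Y) :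
    dim.d (M ⧸ p) (s.map p.mkQ) ≤
      dim.d (Y ⧸ p.comap Y.subtype) ((s.comap Y.subtype).map (p.comap Y.subtype).mkQ) := by
  rw [d_quotient_comap_subtype dim p hsY]
  exact d_le_d_comap_subtype dim (map_mono hsY)

lemma d_quotient_le (p : Submodule R M) {s Y : Submodule R M} (hsY : s ≤ Y)
    {Z : Submodule R (M ⧸ p)} (hsZ : s.map p.mkQ ≤ Z) (hZY : Z ≤ Y.map p.mkQ) :
    dim.d (Y ⧸ p.comap Y.subtype) ((s.comap Y.subtype).map (p.comap Y.subtype).mkQ) ≤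
      dim.d Z ((s.map p.mkQ).comap Z.subtype) := by
  rw [d_quotient_comap_subtype dim p hsY]
  exact d_comap_subtype_anti dim hsZ hZY

lemma d_le_add_of_fg_of_fg {p t : Submodule R M} (hp : p.FG) (ht : t.FG) :
    dim.d M t ≤ dim.d M p + dim.d (M ⧸ p) (t.map p.mkQ) := by
  rw [dim.continuity_inf M p hp, dim.continuity_inf (M ⧸ p) _ (ht.map _)]
  refine ENNReal.le_iInf_add_iInf fun ⟨Y₁, hY₁, hpY₁⟩ ⟨Z, hZ, htZ⟩ => ?_
  obtain ⟨L, hL, -, rfl⟩ := exists_fg_le_map_eq (f := p.mkQ) (q := ⊤) hZ (by simp)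
  let Y := Y₁ ⊔ (L ⊔ t)
  have : Module.Finite R Y := Module.Finite.iff_fg.2 (hY₁.sup (hL.sup ht))
  have htY : t ≤ Y := le_sup_right.trans le_sup_right
  calc dim.d M t ≤ dim.d Y (t.comap Y.subtype) := d_le_d_comap_subtype dim htY
    _ ≤ dim.d Y (p.comap Y.subtype ⊔ t.comap Y.subtype) := d_mono dim le_sup_right
    _ = dim.d Y (p.comap Y.subtype) +
          dim.d (Y ⧸ p.comap Y.subtype) ((t.comap Y.subtype).map (p.comap Y.subtype).mkQ) :=
        d_sup_eq_add_of_finite dim _ _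
    _ ≤ dim.d Y₁ (p.comap Y₁.subtype) + dim.d (L.map p.mkQ) ((t.map p.mkQ).comap _) :=
        add_le_add (d_comap_subtype_anti dim hpY₁ le_sup_left)
          (d_quotient_le dim p htY htZ (map_mono (le_sup_left.trans le_sup_right)))

/-- `dim(p ⊓ Y|Y)` may exceed `dim(p|M)`, so `p ⊓ Y` is exhausted by finitely generated `C'`, whose
images in `M` are finitely generated submodules of `p`; finiteness of `dim(·|Y)` lets `dim(C|Y)`
be cancelled in the end. -/
lemma d_le_add_d_quotient {p t Y : Submodule R M} (ht : t.FG) (hY : Y.FG) (htY : t ≤ Y) :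
    dim.d M t ≤ dim.d M p +
      dim.d (Y ⧸ p.comap Y.subtype) ((t.comap Y.subtype).map (p.comap Y.subtype).mkQ) := by
  have : Module.Finite R Y := Module.Finite.iff_fg.2 hY
  set C := p.comap Y.subtype
  set T := t.comap Y.subtype
  refine (ENNReal.add_le_add_iff_left (d_ne_top dim C)).1 ?_
  calc dim.d Y C + dim.d M t = ⨆ C' : {C' // C'.FG ∧ C' ≤ C}, dim.d Y C'.1 + dim.d M t := by
        rw [dim.continuity_sup Y C, ENNReal.iSup_add]
    _ ≤ dim.d M p + dim.d Y (C ⊔ T) := iSup_le fun ⟨C', hC', hC'C⟩ => ?_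
    _ = dim.d Y C + (dim.d M p + dim.d (Y ⧸ C) (T.map C.mkQ)) := by
        rw [d_sup_eq_add_of_finite]; ring
  have hcomap : (C'.map Y.subtype).comap Y.subtype = C' :=
    comap_map_eq_of_injective Y.injective_subtype C'
  have hquot := d_map_mkQ_le_d_quotient dim (C'.map Y.subtype) htY
  rw [hcomap] at hquot
  calc dim.d Y C' + dim.d M t
      ≤ dim.d Y C' + (dim.d M (C'.map Y.subtype) +
          dim.d (M ⧸ C'.map Y.subtype) (t.map (C'.map Y.subtype).mkQ)) :=
        add_le_add le_rfl (d_le_add_of_fg_of_fg dim (hC'.map _) ht)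
    _ ≤ dim.d Y C' + (dim.d M p + dim.d (Y ⧸ C') (T.map C'.mkQ)) :=
        add_le_add le_rfl (add_le_add (d_mono dim (map_le_iff_le_comap.2 hC'C)) hquot)
    _ = dim.d M p + dim.d Y (C' ⊔ T) := by rw [d_sup_eq_add_of_finite]; ring
    _ ≤ dim.d M p + dim.d Y (C ⊔ T) := add_le_add le_rfl (d_mono dim (sup_le_sup_right hC'C T))

lemma d_le_add_of_fg {p t : Submodule R M} (ht : t.FG) :
    dim.d M t ≤ dim.d M p + dim.d (M ⧸ p) (t.map p.mkQ) := by
  rw [dim.continuity_inf (M ⧸ p) _ (ht.map _), ENNReal.add_iInf]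
  refine le_iInf fun ⟨Z, hZ, htZ⟩ => ?_
  obtain ⟨L, hL, -, rfl⟩ := exists_fg_le_map_eq (f := p.mkQ) (q := ⊤) hZ (by simp)
  exact (d_le_add_d_quotient dim ht (ht.sup hL) le_sup_left).trans
    (add_le_add le_rfl (d_quotient_le dim p le_sup_left htZ (map_mono le_sup_right)))

lemma d_sup_le_add (p q : Submodule R M) :
    dim.d M (p ⊔ q) ≤ dim.d M p + dim.d (M ⧸ p) (q.map p.mkQ) := by
  rw [dim.continuity_sup M (p ⊔ q)]
  refine iSup_le fun ⟨t, ht, htpq⟩ => (d_le_add_of_fg dim ht).trans (add_le_add le_rfl ?_)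
  refine d_mono dim ?_
  simpa only [Submodule.map_sup, mkQ_map_self, bot_sup_eq] using map_mono (f := p.mkQ) htpq

lemma add_le_d_sup_of_fg {p i L : Submodule R M} (hi : i.FG) (hip : i ≤ p) (hL : L.FG) :
    dim.d M i + dim.d (M ⧸ p) (L.map p.mkQ) ≤ dim.d M (i ⊔ L) := by
  rw [dim.continuity_inf M _ (hi.sup hL)]
  refine le_iInf fun ⟨Y, hY, hiLY⟩ => ?_
  have : Module.Finite R Y := Module.Finite.iff_fg.2 hY
  set C := p.comap Y.subtype
  set Q := (i ⊔ L).comap Y.subtype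
  have hdi : dim.d M i ≤ dim.d Y (C ⊓ Q) :=
    (d_le_d_comap_subtype dim (le_sup_left.trans hiLY)).trans
      (d_mono dim (le_inf (comap_mono hip) (comap_mono le_sup_left)))
  have hdL : dim.d (M ⧸ p) (L.map p.mkQ) ≤ dim.d (Y ⧸ C) (Q.map C.mkQ) :=
    (d_mono dim (map_mono le_sup_right)).trans (d_map_mkQ_le_d_quotient dim p hiLY)
  -- `C` need not lie in `Q`, hence the detour through `C ⊓ Q` and submodularity.
  refine (ENNReal.add_le_add_iff_left (d_ne_top dim C)).1 ?_
  calc dim.d Y C + (dim.d M i + dim.d (M ⧸ p) (L.map p.mkQ))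
      ≤ dim.d Y C + (dim.d Y (C ⊓ Q) + dim.d (Y ⧸ C) (Q.map C.mkQ)) :=
        add_le_add le_rfl (add_le_add hdi hdL)
    _ = dim.d Y (C ⊔ Q) + dim.d Y (C ⊓ Q) := by rw [d_sup_eq_add_of_finite]; ring
    _ ≤ dim.d Y C + dim.d Y Q := d_sup_add_d_inf_le_of_finite dim C Q

lemma add_le_d_sup (p q : Submodule R M) :
    dim.d M p + dim.d (M ⧸ p) (q.map p.mkQ) ≤ dim.d M (p ⊔ q) := by
  rw [dim.continuity_sup M p, dim.continuity_sup (M ⧸ p) (q.map p.mkQ)]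
  refine ENNReal.iSup_add_iSup_le fun ⟨i, hi, hip⟩ ⟨Z, hZ, hZq⟩ => ?_
  obtain ⟨L, hL, hLq, rfl⟩ := exists_fg_le_map_eq hZ hZq
  exact (add_le_d_sup_of_fg dim hi hip hL).trans (d_mono dim (sup_le_sup hip hLq))

theorem d_sup_eq_add (p q : Submodule R M) :
    dim.d M (p ⊔ q) = dim.d M p + dim.d (M ⧸ p) (q.map p.mkQ) :=
  le_antisymm (d_sup_le_add dim p q) (add_le_d_sup dim p q)

end BivariantSylvesterRank

/-- composition additivity. Let `dim(·|·)` be a bivariant Sylvester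
module rank function for `R` and let `rk(α) := dim(im α | cod α)` be the associated
extended Sylvester map rank function. For `α : M₁ → M₂` and `β : M₂ → M₃`,
`rk(β) = rk(αβ) + rk(β/α)`, where `β/α : M₂/im(α) → M₃/im(αβ)` is induced by `β`. -/
theorem bivariantSylvesterRank_comp_additivity (R : Type u) [Ring R]
    (dim : BivariantSylvesterRank R)
    (M₁ M₂ M₃ : Type u) [AddCommGroup M₁] [Module R M₁] [AddCommGroup M₂] [Module R M₂]
    [AddCommGroup M₃] [Module R M₃]
    (α : M₁ →ₗ[R] M₂) (β : M₂ →ₗ[R] M₃) :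
    dim.d M₃ (LinearMap.range β) =
      dim.d M₃ (LinearMap.range (β.comp α)) +
        dim.d (M₃ ⧸ LinearMap.range (β.comp α))
          (LinearMap.range
            (Submodule.mapQ (LinearMap.range α) (LinearMap.range (β.comp α)) β
              (fun x hx => by
                obtain ⟨y, rfl⟩ := hx
                exact ⟨y, rfl⟩))) := by
  rw [Submodule.range_mapQ, ← dim.d_sup_eq_add, sup_eq_right.2 (LinearMap.range_comp_le_range α β)]
end

section
/- Let π : R → S be an epimorphism of unital rings and let rk_R be an extended Sylvester map rank function for R satisfying rk_R(π) = rk_R(id_S) = 1 (viewing π : R → S and id_S as R-module maps). Then rk_R(id_S ⊗_R id_M) = rk_R(id_M) for every finitely presented R-module M. -/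
/-!
From `rk(π) = rk(id_S) = 1 < ∞` and additivity, the cokernel `S / π(R)` has rank zero, hence so
does `S^k / π(R^k)`. Write `M = R^m / R^n A` and compare the two presentations
`A : R^n → R^m` and `π(A) : S^n → S^m` through `π`. With `φ = π ∘ A`, the induced map
`M → S^m / im φ` has a rank-null cokernel, so `rk(id_{S^m / im φ}) ≤ rk(id_M)`; additivity for
`A` and `φ`, whose codomains both have rank `m`, together with `rk φ ≤ rk A` gives the reverse
inequality. Finally `S^m / im φ → S^m / im π(A)` is a quotient by the image of a map that kills
`π(R^n)`, hence of rank zero, so both modules have the same rank.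
-/

universe u
open scoped NNReal ENNReal

/-- An extended Sylvester map rank function for a unital ring `R`: an `ℝ≥0∞`-valued function
on all maps between left `R`-modules, satisfying normalization, submultiplicativity,
direct sum additivity, two continuity conditions with respect to direct limits, and
additivity `rk(id_{M₂}) = rk(α) + rk(id_{coker α})`. -/
structure ExtendedSylvesterMapRank (R : Type u) [Ring R] where
  r : ∀ {M N : Type u} [AddCommGroup M] [Module R M] [AddCommGroup N] [Module R N],
      (M →ₗ[R] N) → ℝ≥0∞
  r_zero : ∀ (M N : Type u) [AddCommGroup M] [Module R M] [AddCommGroup N] [Module R N],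
      r (0 : M →ₗ[R] N) = 0
  r_id_ring : r (LinearMap.id : R →ₗ[R] R) = 1
  r_comp : ∀ {M N P : Type u} [AddCommGroup M] [Module R M] [AddCommGroup N] [Module R N]
      [AddCommGroup P] [Module R P] (α : M →ₗ[R] N) (β : N →ₗ[R] P),
      r (β.comp α) ≤ min (r α) (r β)
  r_prodMap : ∀ {M N P Q : Type u} [AddCommGroup M] [Module R M] [AddCommGroup N] [Module R N]
      [AddCommGroup P] [Module R P] [AddCommGroup Q] [Module R Q]
      (α : M →ₗ[R] N) (β : P →ₗ[R] Q),
      r (α.prodMap β) = r α + r β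
  continuity_from : ∀ (J : Type u) [Preorder J] [IsDirected J (· ≤ ·)] [Nonempty J]
      [DecidableEq J] (G : J → Type u) [∀ j, AddCommGroup (G j)] [∀ j, Module R (G j)]
      (f : ∀ i j, i ≤ j → G i →ₗ[R] G j) [DirectedSystem G (fun i j h => f i j h)]
      (M : Type u) [AddCommGroup M] [Module R M]
      (α : ∀ j, G j →ₗ[R] M) (αlim : Module.DirectLimit G f →ₗ[R] M),
      (∀ (i j : J) (h : i ≤ j), (α j).comp (f i j h) = α i) →
      (∀ j : J, αlim.comp (Module.DirectLimit.of R J G f j) = α j) →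
      Filter.Tendsto (fun j => r (α j)) Filter.atTop (nhds (r αlim))
  continuity_to : ∀ (J : Type u) [Preorder J] [IsDirected J (· ≤ ·)] [Nonempty J]
      [DecidableEq J] (G : J → Type u) [∀ j, AddCommGroup (G j)] [∀ j, Module R (G j)]
      (f : ∀ i j, i ≤ j → G i →ₗ[R] G j) [DirectedSystem G (fun i j h => f i j h)]
      (M : Type u) [AddCommGroup M] [Module R M], Module.Finite R M →
      ∀ (α : ∀ j, M →ₗ[R] G j) (αlim : M →ₗ[R] Module.DirectLimit G f),
      (∀ (i j : J) (h : i ≤ j), (f i j h).comp (α i) = α j) →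
      (∀ j : J, (Module.DirectLimit.of R J G f j).comp (α j) = αlim) →
      Filter.Tendsto (fun j => r (α j)) Filter.atTop (nhds (r αlim))
  additivity : ∀ {M N : Type u} [AddCommGroup M] [Module R M] [AddCommGroup N] [Module R N]
      (α : M →ₗ[R] N),
      r (LinearMap.id : N →ₗ[R] N) =
        r α + r (LinearMap.id : (N ⧸ LinearMap.range α) →ₗ[R] (N ⧸ LinearMap.range α))

/-- The cokernel of the matrix `A.map π` over `S`, i.e. `S ⊗_R M` for the finitely
presented `R`-module `M` presented by the matrix `A`. -/
abbrev MatrixCokernel (S : Type u) [Ring S] {n m : ℕ} (B : Matrix (Fin n) (Fin m) S) :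
    Type u :=
  (Fin m → S) ⧸ LinearMap.range B.vecMulLinear

namespace ExtendedSylvesterMapRank

variable {R : Type u} [Ring R] (rk : ExtendedSylvesterMapRank R)
  {M N P : Type u} [AddCommGroup M] [Module R M] [AddCommGroup N] [Module R N]
  [AddCommGroup P] [Module R P]

/-- `dim(M|M)` for the bivariant rank function associated with `rk`. -/
def dim (M : Type u) [AddCommGroup M] [Module R M] : ℝ≥0∞ := rk.r (LinearMap.id : M →ₗ[R] M)

lemma dim_eq_r_add_dim_quotient (α : M →ₗ[R] N) :
    rk.dim N = rk.r α + rk.dim (N ⧸ LinearMap.range α) :=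
  rk.additivity α

lemma dim_ring : rk.dim R = 1 :=
  rk.r_id_ring

lemma dim_prod : rk.dim (M × N) = rk.dim M + rk.dim N := by
  rw [dim, ← LinearMap.prodMap_id, rk.r_prodMap]
  rfl

lemma r_comp_le_left (α : M →ₗ[R] N) (β : N →ₗ[R] P) : rk.r (β ∘ₗ α) ≤ rk.r α :=
  (rk.r_comp α β).trans (min_le_left _ _)

lemma r_comp_le_right (α : M →ₗ[R] N) (β : N →ₗ[R] P) : rk.r (β ∘ₗ α) ≤ rk.r β :=
  (rk.r_comp α β).trans (min_le_right _ _)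

lemma r_le_dim_domain (α : M →ₗ[R] N) : rk.r α ≤ rk.dim M := by
  simpa [dim] using rk.r_comp_le_left LinearMap.id α

lemma r_le_dim_codomain (α : M →ₗ[R] N) : rk.r α ≤ rk.dim N := by
  simpa [dim] using rk.r_comp_le_right α LinearMap.id

lemma dim_congr (e : M ≃ₗ[R] N) : rk.dim M = rk.dim N := by
  have key : ∀ {A B : Type u} [AddCommGroup A] [Module R A] [AddCommGroup B] [Module R B]
      (f : A ≃ₗ[R] B), rk.dim B ≤ rk.dim A := by
    intro A B _ _ _ _ f
    rw [dim, ← f.comp_symm]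
    exact (rk.r_comp_le_left _ _).trans (rk.r_le_dim_codomain _)
  exact le_antisymm (key e.symm) (key e)

lemma dim_eq_zero_of_subsingleton [Subsingleton M] : rk.dim M = 0 := by
  rw [dim, Subsingleton.elim LinearMap.id 0, rk.r_zero]

lemma r_eq_dim_of_surjective (α : M →ₗ[R] N) (hα : Function.Surjective α) :
    rk.r α = rk.dim N := by
  have : Subsingleton (N ⧸ LinearMap.range α) :=
    Submodule.Quotient.subsingleton_iff.mpr (LinearMap.range_eq_top.mpr hα)
  rw [rk.dim_eq_r_add_dim_quotient α, rk.dim_eq_zero_of_subsingleton, add_zero]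

lemma dim_pi (k : ℕ) : rk.dim (Fin k → M) = k * rk.dim M := by
  induction k with
  | zero => rw [rk.dim_eq_zero_of_subsingleton, Nat.cast_zero, zero_mul]
  | succ k ih =>
    rw [← rk.dim_congr (Fin.consLinearEquiv R fun _ => M), rk.dim_prod, ih, Nat.cast_succ,
      add_mul, one_mul, add_comm]

lemma dim_quotient_range_eq_zero_of_r_eq (α : M →ₗ[R] N) (hα : rk.r α = rk.dim N)
    (hfin : rk.dim N ≠ ⊤) : rk.dim (N ⧸ LinearMap.range α) = 0 := by
  have h := rk.dim_eq_r_add_dim_quotient α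
  rw [hα] at h
  exact (ENNReal.add_right_inj hfin).mp (h.symm.trans (add_zero _).symm)

lemma r_eq_zero_of_comp_eq_zero (p : M →ₗ[R] N) (hp : rk.dim (N ⧸ LinearMap.range p) = 0)
    (β : N →ₗ[R] P) (hβ : β ∘ₗ p = 0) : rk.r β = 0 := by
  have hle : LinearMap.range p ≤ LinearMap.ker β := LinearMap.range_le_ker_iff.mpr hβ
  refine le_antisymm ?_ zero_le
  calc rk.r β = rk.r (Submodule.liftQ _ β hle ∘ₗ (LinearMap.range p).mkQ) := by
        rw [Submodule.liftQ_mkQ]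
    _ ≤ rk.r (Submodule.liftQ _ β hle) := rk.r_comp_le_right _ _
    _ ≤ 0 := hp ▸ rk.r_le_dim_domain _

lemma dim_quotient_le_of_le_comap (p : M →ₗ[R] N) (hp : rk.dim (N ⧸ LinearMap.range p) = 0)
    {K : Submodule R M} {L : Submodule R N} (hKL : K ≤ L.comap p) :
    rk.dim (N ⧸ L) ≤ rk.dim (M ⧸ K) := by
  set ρ := K.mapQ L p hKL
  set β := (LinearMap.range ρ).mkQ ∘ₗ L.mkQ
  have hβ_surj : Function.Surjective β :=
    (LinearMap.range ρ).mkQ_surjective.comp L.mkQ_surjective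
  have hβp : β ∘ₗ p = 0 := by
    ext x
    exact (Submodule.Quotient.mk_eq_zero _).mpr ⟨K.mkQ x, rfl⟩
  have hcoker : rk.dim ((N ⧸ L) ⧸ LinearMap.range ρ) = 0 := by
    rw [← rk.r_eq_dim_of_surjective β hβ_surj, rk.r_eq_zero_of_comp_eq_zero p hp β hβp]
  rw [rk.dim_eq_r_add_dim_quotient ρ, hcoker, add_zero]
  exact rk.r_le_dim_domain ρ

lemma dim_quotient_eq_of_r_mkQ_comp_eq_zero (q : M →ₗ[R] N) {L : Submodule R N}
    (hL : L ≤ LinearMap.range q) (hq : rk.r (L.mkQ ∘ₗ q) = 0) :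
    rk.dim (N ⧸ L) = rk.dim (N ⧸ LinearMap.range q) := by
  rw [rk.dim_eq_r_add_dim_quotient (L.mkQ ∘ₗ q), hq, zero_add]
  exact rk.dim_congr ((Submodule.quotEquivOfEq _ _ (LinearMap.range_comp q L.mkQ)).trans
    (Submodule.quotientQuotientEquivQuotient L _ hL))

lemma dim_quotient_range_piMap_eq_zero (f : M →ₗ[R] N)
    (hf : rk.dim (N ⧸ LinearMap.range f) = 0) (k : ℕ) :
    rk.dim ((Fin k → N) ⧸ LinearMap.range (LinearMap.piMap fun _ : Fin k => f)) = 0 := by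
  set g := LinearMap.piMap fun _ : Fin k => (LinearMap.range f).mkQ
  have hker : LinearMap.ker g = LinearMap.range (LinearMap.piMap fun _ : Fin k => f) := by
    ext x
    simp [g, funext_iff, Submodule.Quotient.mk_eq_zero, Classical.skolem]
  have hg : Function.Surjective g :=
    Function.Surjective.piMap fun _ => (LinearMap.range f).mkQ_surjective
  rw [rk.dim_congr ((Submodule.quotEquivOfEq _ _ hker.symm).trans
      (g.quotKerEquivOfSurjective hg)), rk.dim_pi, hf, mul_zero]

theorem dim_quotient_range_eq_of_comp_eq {F₁ F₀ G₁ G₀ : Type u}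
    [AddCommGroup F₁] [Module R F₁] [AddCommGroup F₀] [Module R F₀]
    [AddCommGroup G₁] [Module R G₁] [AddCommGroup G₀] [Module R G₀]
    (a : F₁ →ₗ[R] F₀) (b : G₁ →ₗ[R] G₀) (p₁ : F₁ →ₗ[R] G₁) (p₀ : F₀ →ₗ[R] G₀)
    (hcomm : b ∘ₗ p₁ = p₀ ∘ₗ a)
    (hp₁ : rk.dim (G₁ ⧸ LinearMap.range p₁) = 0) (hp₀ : rk.dim (G₀ ⧸ LinearMap.range p₀) = 0)
    (hF₀G₀ : rk.dim F₀ = rk.dim G₀) (hF₀ : rk.dim F₀ ≠ ⊤) :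
    rk.dim (G₀ ⧸ LinearMap.range b) = rk.dim (F₀ ⧸ LinearMap.range a) := by
  set φ := p₀ ∘ₗ a
  have hφb : rk.dim (G₀ ⧸ LinearMap.range φ) = rk.dim (G₀ ⧸ LinearMap.range b) := by
    refine rk.dim_quotient_eq_of_r_mkQ_comp_eq_zero b ?_ ?_
    · rw [← hcomm]
      exact LinearMap.range_comp_le_range p₁ b
    · refine rk.r_eq_zero_of_comp_eq_zero p₁ hp₁ _ ?_
      rw [LinearMap.comp_assoc, hcomm]
      exact LinearMap.range_le_ker_iff.mp (Submodule.ker_mkQ _).ge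
  have hφa_le : rk.dim (G₀ ⧸ LinearMap.range φ) ≤ rk.dim (F₀ ⧸ LinearMap.range a) :=
    rk.dim_quotient_le_of_le_comap p₀ hp₀
      (Submodule.map_le_iff_le_comap.mp (LinearMap.range_comp a p₀).ge)
  have ha_fin : rk.r a ≠ ⊤ := ne_top_of_le_ne_top hF₀ (rk.r_le_dim_codomain a)
  have hφa_ge : rk.dim (F₀ ⧸ LinearMap.range a) ≤ rk.dim (G₀ ⧸ LinearMap.range φ) := by
    refine (ENNReal.add_le_add_iff_left ha_fin).mp ?_
    rw [← rk.dim_eq_r_add_dim_quotient a, hF₀G₀, rk.dim_eq_r_add_dim_quotient φ]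
    exact add_le_add_left (rk.r_comp_le_left a p₀) _
  rw [← hφb, le_antisymm hφa_le hφa_ge]

end ExtendedSylvesterMapRank

/-- Let `π : R → S` be an epimorphism of unital rings and `rk_R` an
extended Sylvester map rank function for `R` with `rk_R(π) = rk_R(id_S) = 1`, viewing `π`
and `id_S` as maps of `R`-modules (`S` is an `R`-module via `π`). Then
`rk_R(id_{S ⊗_R M}) = rk_R(id_M)` for every finitely presented `R`-module `M`; here for
`M` presented by a matrix `A` (i.e. `M ≅ R^m / R^n A`), the module `S ⊗_R M` is presented
over `S` by the matrix `π(A)`, viewed as an `R`-module via `π`. -/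
theorem extendedSylvesterMapRank_of_rank_pi_eq_one (R S : Type u) [Ring R] [Ring S]
    (π : R →+* S)
    (rkR : ExtendedSylvesterMapRank R)
    (hπ : @ExtendedSylvesterMapRank.r R _ rkR R S _ _ _ (Module.compHom S π)
        (@LinearMap.mk R R _ _ (RingHom.id R) R S _ _ _ (Module.compHom S π)
          ⟨⇑π, fun x y => π.map_add x y⟩ (fun r x => by exact π.map_mul r x)) = 1)
    (hid : @ExtendedSylvesterMapRank.r R _ rkR S S _ (Module.compHom S π) _
        (Module.compHom S π) (@LinearMap.id R S _ _ (Module.compHom S π)) = 1) :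
    ∀ (n m : ℕ) (A : Matrix (Fin n) (Fin m) R)
      (M : Type u) [AddCommGroup M] [Module R M], Module.FinitePresentation R M →
      (((Fin m → R) ⧸ LinearMap.range A.vecMulLinear) ≃ₗ[R] M) →
      @ExtendedSylvesterMapRank.r R _ rkR (MatrixCokernel S (A.map π))
          (MatrixCokernel S (A.map π)) _ (Module.compHom _ π) _ (Module.compHom _ π)
          (@LinearMap.id R (MatrixCokernel S (A.map π)) _ _
            (Module.compHom (MatrixCokernel S (A.map π)) π)) =
        rkR.r (LinearMap.id : M →ₗ[R] M) := by
  intro n m A M _ _ _ e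
  let _ : Module R S := Module.compHom S π
  have : IsScalarTower R S S := ⟨fun r s t => mul_assoc (π r) s t⟩
  let πL : R →ₗ[R] S := { toFun := π, map_add' := π.map_add, map_smul' := π.map_mul }
  let AS : (Fin n → S) →ₗ[R] (Fin m → S) := (A.map π).vecMulLinear.restrictScalars R
  have hcomm : AS ∘ₗ LinearMap.piMap (fun _ => πL) =
      LinearMap.piMap (fun _ => πL) ∘ₗ A.vecMulLinear := by
    refine LinearMap.ext fun v => funext fun j => ?_
    exact (RingHom.map_vecMul π A v j).symm
  have hS : rkR.dim S = 1 := hid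
  have hπL := rkR.dim_quotient_range_eq_zero_of_r_eq πL (hπ.trans hS.symm)
    (hS ▸ ENNReal.one_ne_top)
  have hfree : rkR.dim (Fin m → R) = rkR.dim (Fin m → S) := by
    rw [rkR.dim_pi, rkR.dim_pi, rkR.dim_ring, hS]
  calc _ = rkR.dim ((Fin m → S) ⧸ LinearMap.range AS) :=
        (rkR.dim_congr ((Submodule.quotEquivOfEq _ _ (LinearMap.range_restrictScalars _)).trans
          (Submodule.Quotient.restrictScalarsEquiv R _))).symm
    _ = rkR.dim ((Fin m → R) ⧸ LinearMap.range A.vecMulLinear) :=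
        rkR.dim_quotient_range_eq_of_comp_eq _ _ _ _ hcomm
          (rkR.dim_quotient_range_piMap_eq_zero πL hπL n)
          (rkR.dim_quotient_range_piMap_eq_zero πL hπL m) hfree
          (by rw [rkR.dim_pi, rkR.dim_ring]; simp)
    _ = rkR.dim M := rkR.dim_congr e
end
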